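/- arXiv:2505.24393 — 2 statements merged into one kernel-verified Lean document; each statement's English description precedes it below -/
import Mathlib

section
/- (Existence of Ideal Security Equilibrium) Assume N ≥ 1 and f_p + C_fraud ≥ 0. The profile in which every validator is online (π_v = 1) and the proposer is honest (π_p = 1) is a Nash equilibrium — that is, EU_v(π; 1, 1) ≤ EU_v(1; 1, 1) for every π ∈ [0,1] and EU_p(q; 1) ≤ EU_p(1; 1) for every q ∈ [0,1] — if and only if c_m ≤ (π_a/N)·c_off. -/
noncomputable def U_On (f_v c_m r_v : ℝ) (N : ℕ) (πp πv : ℝ) : ℝ :=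
  f_v - c_m + (1 - πp) * r_v / (1 + ((N : ℝ) - 1) * πv)

noncomputable def U_Off (f_v πa c_off C_fail : ℝ) (N : ℕ) (πp πv : ℝ) : ℝ :=
  πp * f_v - (πa / (N : ℝ)) * c_off - (1 - πp) * (1 - πv) ^ (N - 1) * C_fail

noncomputable def EU_v (f_v c_m πa c_off C_fail r_v : ℝ) (N : ℕ) (π πp πv : ℝ) : ℝ :=
  π * U_On f_v c_m r_v N πp πv + (1 - π) * U_Off f_v πa c_off C_fail N πp πv

noncomputable def U_F (f_p C_fraud R_fraud : ℝ) (N : ℕ) (πv : ℝ) : ℝ :=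
  (1 - (1 - πv) ^ N) * (-C_fraud) + (1 - πv) ^ N * (f_p + R_fraud)

noncomputable def EU_p (f_p C_fraud R_fraud : ℝ) (N : ℕ) (q πv : ℝ) : ℝ :=
  q * f_p + (1 - q) * U_F f_p C_fraud R_fraud N πv

/-! Both expected utilities are affine in the player's own mixing probability, so the pure
strategy `1` is a best response exactly when it beats the pure strategy `0`. Against an honest
proposer and online validators, this is `c_m ≤ (π_a / N) c_off` for a validator and
`-C_fraud ≤ f_p` for the proposer (fraud is always detected once `N ≥ 1`). -/

theorem forall_mem_Icc_mix_le_iff {𝕜 : Type*} [Field 𝕜] [LinearOrder 𝕜] [IsStrictOrderedRing 𝕜]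
    {a b : 𝕜} : (∀ t ∈ Set.Icc (0 : 𝕜) 1, t * a + (1 - t) * b ≤ a) ↔ b ≤ a := by
  refine ⟨fun h ↦ by simpa using h 0 ⟨le_rfl, zero_le_one⟩, fun hba t ht ↦ ?_⟩
  calc t * a + (1 - t) * b ≤ t * a + (1 - t) * a := by gcongr; linarith [ht.2]
    _ = a := by ring

section Utilities

variable (f_v c_m πa c_off C_fail r_v f_p C_fraud R_fraud : ℝ) (N : ℕ)

theorem EU_v_one (πp πv : ℝ) :
    EU_v f_v c_m πa c_off C_fail r_v N 1 πp πv = U_On f_v c_m r_v N πp πv := by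
  simp [EU_v]

theorem EU_p_one (πv : ℝ) : EU_p f_p C_fraud R_fraud N 1 πv = f_p := by
  simp [EU_p]

theorem U_On_one_left (πv : ℝ) : U_On f_v c_m r_v N 1 πv = f_v - c_m := by
  simp [U_On]

theorem U_Off_one_left (πv : ℝ) :
    U_Off f_v πa c_off C_fail N 1 πv = f_v - πa / N * c_off := by
  simp [U_Off]

theorem U_F_one (hN : N ≠ 0) : U_F f_p C_fraud R_fraud N 1 = -C_fraud := by
  simp [U_F, zero_pow hN]

end Utilities

theorem ideal_security_equilibrium_existence_general
    (f_v c_m πa c_off C_fail r_v f_p C_fraud R_fraud : ℝ) (N : ℕ) (hN : 1 ≤ N)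
    (hfC : 0 ≤ f_p + C_fraud) :
    ((∀ π ∈ Set.Icc (0 : ℝ) 1,
        EU_v f_v c_m πa c_off C_fail r_v N π 1 1 ≤
          EU_v f_v c_m πa c_off C_fail r_v N 1 1 1) ∧
      (∀ q ∈ Set.Icc (0 : ℝ) 1,
        EU_p f_p C_fraud R_fraud N q 1 ≤ EU_p f_p C_fraud R_fraud N 1 1)) ↔
    c_m ≤ (πa / (N : ℝ)) * c_off := by
  rw [EU_v_one, EU_p_one]
  simp only [EU_v, EU_p, forall_mem_Icc_mix_le_iff, U_On_one_left, U_Off_one_left,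
    U_F_one _ _ _ _ (Nat.one_le_iff_ne_zero.mp hN)]
  exact ⟨fun h ↦ by linarith [h.1], fun _ ↦ ⟨by linarith, by linarith⟩⟩

theorem ideal_security_equilibrium_existence
    (f_v c_m πa c_off C_fail r_v f_p C_fraud R_fraud : ℝ) (N : ℕ) (hN : 1 ≤ N)
    (hπa : πa ∈ Set.Icc (0 : ℝ) 1) (hfC : 0 ≤ f_p + C_fraud) :
    ((∀ π ∈ Set.Icc (0 : ℝ) 1,
        EU_v f_v c_m πa c_off C_fail r_v N π 1 1 ≤
          EU_v f_v c_m πa c_off C_fail r_v N 1 1 1) ∧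
      (∀ q ∈ Set.Icc (0 : ℝ) 1,
        EU_p f_p C_fraud R_fraud N q 1 ≤ EU_p f_p C_fraud R_fraud N 1 1)) ↔
    c_m ≤ (πa / (N : ℝ)) * c_off :=
  ideal_security_equilibrium_existence_general f_v c_m πa c_off C_fail r_v f_p C_fraud R_fraud N hN
    hfC
end

section
/- (Robustness of Ideal Security Equilibrium under Weak Randomness) Assume N ≥ 1, c_m ≤ (π_a/N)·c_off, and f_p ≥ −C_fraud. Then in the RAT-evasion model the profile (π_v = 1 for all validators, π_p = 1) remains a Nash equilibrium: EU_v^ev(π; 1, 1) ≤ EU_v^ev(1; 1, 1) for every π ∈ [0,1], and EU_p(q; 1) ≤ EU_p(1; 1) for every q ∈ [0,1]. -/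
/-- Validator's offline utility in the RAT-evasion model. -/
noncomputable def U_Off_ev (f_v πa c_off C_fail : ℝ) (N : ℕ) (πp πv : ℝ) : ℝ :=
  πp * (f_v - (πa / (N : ℝ)) * c_off) - (1 - πp) * (1 - πv) ^ (N - 1) * C_fail

noncomputable def EU_v_ev (f_v c_m πa c_off C_fail r_v : ℝ) (N : ℕ) (π πp πv : ℝ) : ℝ :=
  π * U_On f_v c_m r_v N πp πv + (1 - π) * U_Off_ev f_v πa c_off C_fail N πp πv

/-! Against an honest proposer and fully online peers, going offline only trades the operational
cost `c_m` for the expected attention-test penalty `(πa / N) c_off`, so staying online is a best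
response; against fully online validators fraud is always detected, so it earns `-C_fraud ≤ f_p`.
Each expected utility is a mixture of the two pure utilities, so a pure strategy that is weakly
better than the other one beats every mixture. -/

lemma mix_le_of_le {a b t : ℝ} (hba : b ≤ a) (ht : t ≤ 1) : t * a + (1 - t) * b ≤ a := by
  nlinarith

lemma U_On_honest (f_v c_m r_v : ℝ) (N : ℕ) (πv : ℝ) :
    U_On f_v c_m r_v N 1 πv = f_v - c_m := by
  simp [U_On]

lemma U_Off_ev_honest (f_v πa c_off C_fail : ℝ) (N : ℕ) (πv : ℝ) :
    U_Off_ev f_v πa c_off C_fail N 1 πv = f_v - πa / N * c_off := by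
  simp [U_Off_ev]

lemma U_F_all_online (f_p C_fraud R_fraud : ℝ) {N : ℕ} (hN : N ≠ 0) :
    U_F f_p C_fraud R_fraud N 1 = -C_fraud := by
  simp [U_F, hN]

lemma EU_v_ev_le_online (f_v c_m πa c_off C_fail r_v : ℝ) (N : ℕ) {π πp πv : ℝ}
    (hoff : U_Off_ev f_v πa c_off C_fail N πp πv ≤ U_On f_v c_m r_v N πp πv) (hπ : π ≤ 1) :
    EU_v_ev f_v c_m πa c_off C_fail r_v N π πp πv ≤
      EU_v_ev f_v c_m πa c_off C_fail r_v N 1 πp πv := by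
  simpa [EU_v_ev] using mix_le_of_le hoff hπ

lemma EU_p_le_honest (f_p C_fraud R_fraud : ℝ) (N : ℕ) {q πv : ℝ}
    (hfraud : U_F f_p C_fraud R_fraud N πv ≤ f_p) (hq : q ≤ 1) :
    EU_p f_p C_fraud R_fraud N q πv ≤ EU_p f_p C_fraud R_fraud N 1 πv := by
  simpa [EU_p] using mix_le_of_le hfraud hq

theorem robustness_under_weak_randomness_general
    (f_v c_m πa c_off C_fail r_v f_p C_fraud R_fraud : ℝ) (N : ℕ) (hN : 1 ≤ N)
    (hcm : c_m ≤ (πa / (N : ℝ)) * c_off)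
    (hfp : -C_fraud ≤ f_p) :
    (∀ π ∈ Set.Icc (0 : ℝ) 1,
      EU_v_ev f_v c_m πa c_off C_fail r_v N π 1 1 ≤
        EU_v_ev f_v c_m πa c_off C_fail r_v N 1 1 1) ∧
    (∀ q ∈ Set.Icc (0 : ℝ) 1,
      EU_p f_p C_fraud R_fraud N q 1 ≤ EU_p f_p C_fraud R_fraud N 1 1) := by
  refine ⟨fun π hπ => EU_v_ev_le_online _ _ _ _ _ _ _ ?_ hπ.2,
    fun q hq => EU_p_le_honest _ _ _ _ ?_ hq.2⟩
  · rw [U_Off_ev_honest, U_On_honest]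
    linarith
  · rw [U_F_all_online _ _ _ (by omega)]
    exact hfp

theorem robustness_under_weak_randomness
    (f_v c_m πa c_off C_fail r_v f_p C_fraud R_fraud : ℝ) (N : ℕ) (hN : 1 ≤ N)
    (hπa : πa ∈ Set.Icc (0 : ℝ) 1)
    (hcm : c_m ≤ (πa / (N : ℝ)) * c_off)
    (hfp : -C_fraud ≤ f_p) :
    (∀ π ∈ Set.Icc (0 : ℝ) 1,
      EU_v_ev f_v c_m πa c_off C_fail r_v N π 1 1 ≤
        EU_v_ev f_v c_m πa c_off C_fail r_v N 1 1 1) ∧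
    (∀ q ∈ Set.Icc (0 : ℝ) 1,
      EU_p f_p C_fraud R_fraud N q 1 ≤ EU_p f_p C_fraud R_fraud N 1 1) :=
  robustness_under_weak_randomness_general f_v c_m πa c_off C_fail r_v f_p C_fraud R_fraud N hN hcm
    hfp
end
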